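/- Let V be a positive abelian semigroup equipped with the algebraic order, and suppose V satisfies the discrete strong Corona Factorization Property: for every x ∈ V, every sequence (y_n) in V and every positive integer m with x ≤ m·y_n for all n, there exists k with x ≤ y_1 + y_2 + ⋯ + y_k. Then the semigroup Λ_σ(V) of countably generated intervals in V, with addition I + J = {x ∈ V : x ≤ y + z for some y ∈ I, z ∈ J} and order given by inclusion, satisfies the strong Corona Factorization Property: whenever X', X, Y_1, Y_2, … are countably generated intervals and m is a positive integer with X' ≪ X and X ⊆ m·Y_n for all n, there exists k with X' ⊆ Y_1 + Y_2 + ⋯ + Y_k. -/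

import Mathlib

namespace Stmt10

variable {V : Type*} [AddCommSemigroup V]

/-- The algebraic order on a (positive) abelian semigroup `V`:
`x ≤ y` iff `y = x` or `y = x + z` for some `z ∈ V`. -/
def ordAlg (x y : V) : Prop := x = y ∨ ∃ z : V, y = x + z

/-- `rep n x` is the `(n+1)`-fold sum `x + ⋯ + x`, so that `rep n x = (n+1)·x`. -/
def rep : ℕ → V → V
  | 0, x => x
  | n + 1, x => rep n x + x

/-- `sumTo y k = y 0 + y 1 + ⋯ + y k`. -/
def sumTo (y : ℕ → V) : ℕ → V
  | 0 => y 0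
  | k + 1 => sumTo y k + y (k + 1)

/-- An interval in `V` (w.r.t. the algebraic order): non-empty, order-hereditary, and
upwards directed. -/
def IsInterval (I : Set V) : Prop :=
  I.Nonempty ∧ (∀ x y : V, ordAlg x y → y ∈ I → x ∈ I) ∧
    ∀ x ∈ I, ∀ y ∈ I, ∃ z ∈ I, ordAlg x z ∧ ordAlg y z

/-- A countably generated interval. -/
def CountablyGenerated (I : Set V) : Prop :=
  IsInterval I ∧ ∃ x : ℕ → V, (∀ n, x n ∈ I) ∧ I = {v : V | ∃ n, ordAlg v (x n)}

/-- The sum of two intervals: `I + J = {x : x ≤ y + z for some y ∈ I, z ∈ J}`. -/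
def setAdd (I J : Set V) : Set V := {x : V | ∃ y ∈ I, ∃ z ∈ J, ordAlg x (y + z)}

/-- `repSet m Y` is the `(m+1)`-fold sum `Y + Y + ⋯ + Y` of the interval `Y`. -/
def repSet : ℕ → Set V → Set V
  | 0, Y => Y
  | m + 1, Y => setAdd (repSet m Y) Y

/-- `sumToSet Y k = Y 0 + Y 1 + ⋯ + Y k`. -/
def sumToSet (Y : ℕ → Set V) : ℕ → Set V
  | 0 => Y 0
  | k + 1 => setAdd (sumToSet Y k) (Y (k + 1))

/-- Compact containment of intervals: `I ≪ J` iff for every increasing sequence of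
intervals whose union contains `J`, some term contains `I`. -/
def ccInt (I J : Set V) : Prop :=
  ∀ Jn : ℕ → Set V, (∀ n, IsInterval (Jn n)) → Monotone Jn →
    J ⊆ ⋃ n, Jn n → ∃ n, I ⊆ Jn n

/-!
Every `x ∈ X` lies in each `(m+1)·Y n`, and since `Y n` is upwards directed the `m+1`
summands can be replaced by a single `z n ∈ Y n`, giving `x ≤ (m+1)·z n` for all `n`.
The discrete strong CFP of `V` then yields `x ≤ z 0 + ⋯ + z k ∈ Y 0 + ⋯ + Y k`. So `X` is
covered by the increasing union of the partial sums `Y 0 + ⋯ + Y k`, and `X' ≪ X` puts `X'`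
inside one of them.
-/

theorem ordAlg_refl (x : V) : ordAlg x x := Or.inl rfl

theorem ordAlg.trans {x y z : V} (hxy : ordAlg x y) (hyz : ordAlg y z) : ordAlg x z := by
  rcases hxy with rfl | ⟨a, rfl⟩
  · exact hyz
  · rcases hyz with rfl | ⟨b, rfl⟩
    · exact Or.inr ⟨a, rfl⟩
    · exact Or.inr ⟨a + b, add_assoc x a b⟩

theorem ordAlg_add_right (x y : V) : ordAlg x (x + y) := Or.inr ⟨y, rfl⟩

theorem ordAlg_add {x y x' y' : V} (h : ordAlg x y) (h' : ordAlg x' y') :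
    ordAlg (x + x') (y + y') := by
  rcases h with rfl | ⟨a, rfl⟩ <;> rcases h' with rfl | ⟨b, rfl⟩
  · exact ordAlg_refl _
  · exact Or.inr ⟨b, (add_assoc x x' b).symm⟩
  · exact Or.inr ⟨a, add_right_comm x a x'⟩
  · exact Or.inr ⟨a + b, add_add_add_comm x a x' b⟩

theorem rep_ordAlg_rep {x y : V} (h : ordAlg x y) : ∀ m, ordAlg (rep m x) (rep m y)
  | 0 => h
  | m + 1 => ordAlg_add (rep_ordAlg_rep h m) h

namespace IsInterval

variable {I J : Set V}

theorem mem_of_ordAlg (hI : IsInterval I) {x y : V} (hxy : ordAlg x y) (hy : y ∈ I) :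
    x ∈ I :=
  hI.2.1 x y hxy hy

theorem setAdd (hI : IsInterval I) (hJ : IsInterval J) : IsInterval (setAdd I J) := by
  obtain ⟨⟨a, ha⟩, -, hIdir⟩ := hI
  obtain ⟨⟨b, hb⟩, -, hJdir⟩ := hJ
  refine ⟨⟨a + b, a, ha, b, hb, ordAlg_refl _⟩, ?_, ?_⟩
  · rintro x y hxy ⟨u, hu, v, hv, hyuv⟩
    exact ⟨u, hu, v, hv, hxy.trans hyuv⟩
  · rintro x ⟨u, hu, v, hv, hxuv⟩ y ⟨u', hu', v', hv', hyuv⟩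
    obtain ⟨u'', hu'', hu_le, hu'_le⟩ := hIdir u hu u' hu'
    obtain ⟨v'', hv'', hv_le, hv'_le⟩ := hJdir v hv v' hv'
    exact ⟨u'' + v'', ⟨u'', hu'', v'', hv'', ordAlg_refl _⟩,
      hxuv.trans (ordAlg_add hu_le hv_le), hyuv.trans (ordAlg_add hu'_le hv'_le)⟩

theorem exists_ordAlg_rep_of_mem_repSet (hI : IsInterval I) :
    ∀ m, ∀ x ∈ repSet m I, ∃ z ∈ I, ordAlg x (rep m z)
  | 0, x, hx => ⟨x, hx, ordAlg_refl _⟩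
  | m + 1, _, ⟨u, hu, v, hv, huv⟩ => by
    obtain ⟨z, hz, hu_le⟩ := exists_ordAlg_rep_of_mem_repSet hI m u hu
    obtain ⟨w, hw, hz_le, hv_le⟩ := hI.2.2 z hz v hv
    exact ⟨w, hw, huv.trans (ordAlg_add (hu_le.trans (rep_ordAlg_rep hz_le m)) hv_le)⟩

end IsInterval

theorem subset_setAdd_left {I J : Set V} (hJ : J.Nonempty) : I ⊆ setAdd I J := by
  obtain ⟨b, hb⟩ := hJ
  exact fun x hx => ⟨x, hx, b, hb, ordAlg_add_right x b⟩

section sumToSet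

variable {Y : ℕ → Set V}

theorem isInterval_sumToSet (hY : ∀ n, IsInterval (Y n)) : ∀ k, IsInterval (sumToSet Y k)
  | 0 => hY 0
  | k + 1 => (isInterval_sumToSet hY k).setAdd (hY (k + 1))

theorem monotone_sumToSet (hY : ∀ n, (Y n).Nonempty) : Monotone (sumToSet Y) :=
  monotone_nat_of_le_succ fun k => subset_setAdd_left (hY (k + 1))

theorem sumTo_mem_sumToSet {z : ℕ → V} (hz : ∀ n, z n ∈ Y n) :
    ∀ k, sumTo z k ∈ sumToSet Y k
  | 0 => hz 0
  | k + 1 => ⟨sumTo z k, sumTo_mem_sumToSet hz k, z (k + 1), hz (k + 1), ordAlg_refl _⟩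

theorem subset_iUnion_sumToSet
    (hV : ∀ (x : V) (y : ℕ → V) (m : ℕ),
      (∀ n, ordAlg x (rep m (y n))) → ∃ k, ordAlg x (sumTo y k))
    {X : Set V} {m : ℕ} (hY : ∀ n, IsInterval (Y n)) (hle : ∀ n, X ⊆ repSet m (Y n)) :
    X ⊆ ⋃ k, sumToSet Y k := by
  intro x hx
  choose z hzY hx_le using fun n => (hY n).exists_ordAlg_rep_of_mem_repSet m x (hle n hx)
  obtain ⟨k, hk⟩ := hV x z m hx_le
  exact Set.mem_iUnion.2
    ⟨k, (isInterval_sumToSet hY k).mem_of_ordAlg hk (sumTo_mem_sumToSet hzY k)⟩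

end sumToSet

theorem lambda_sigma_strong_cfp_general
    (hV : ∀ (x : V) (y : ℕ → V) (m : ℕ),
      (∀ n, ordAlg x (rep m (y n))) → ∃ k, ordAlg x (sumTo y k))
    (X' X : Set V) (Y : ℕ → Set V) (m : ℕ)
    (hY : ∀ n, CountablyGenerated (Y n))
    (hcc : ccInt X' X) (hle : ∀ n, X ⊆ repSet m (Y n)) :
    ∃ k, X' ⊆ sumToSet Y k := by
  have hYint : ∀ n, IsInterval (Y n) := fun n => (hY n).1
  exact hcc (sumToSet Y) (isInterval_sumToSet hYint)
    (monotone_sumToSet fun n => (hYint n).1) (subset_iUnion_sumToSet hV hYint hle)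

/-- Remark 2.16: if `V` (a positive abelian semigroup with the algebraic order) satisfies
the discrete strong Corona Factorization Property, then the semigroup `Λ_σ(V)` of
countably generated intervals satisfies the strong Corona Factorization Property:
whenever `X' ≪ X` and `X ⊆ m·Y_n` for all `n` (with `m` a positive integer, encoded as
`m+1`), there is `k` with `X' ⊆ Y_0 + Y_1 + ⋯ + Y_k`. -/
theorem lambda_sigma_strong_cfp
    (hV : ∀ (x : V) (y : ℕ → V) (m : ℕ),
      (∀ n, ordAlg x (rep m (y n))) → ∃ k, ordAlg x (sumTo y k))
    (X' X : Set V) (Y : ℕ → Set V) (m : ℕ)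
    (hX' : CountablyGenerated X') (hX : CountablyGenerated X)
    (hY : ∀ n, CountablyGenerated (Y n))
    (hcc : ccInt X' X) (hle : ∀ n, X ⊆ repSet m (Y n)) :
    ∃ k, X' ⊆ sumToSet Y k :=
  lambda_sigma_strong_cfp_general hV X' X Y m hY hcc hle

end Stmt10
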